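/- arXiv:2010.00696 — 2 statements merged into one kernel-verified Lean document; each statement's English description precedes it below -/
import Mathlib

section
/- Let h : 2^V → ℝ be submodular with h(∅) = 0, π a permutation of V = {1,...,n}, S^(i) = {π(1),...,π(i)}, and v(π(i)) = h(S^(i)) − h(S^(i−1)). Then v(X) := Σ_{e∈X} v(e) ≤ h(X) for every X ⊆ V. -/
def Submodular {V : Type*} [DecidableEq V] (f : Finset V → ℝ) : Prop :=
  ∀ ⦃X Y : Finset V⦄ ⦃v : V⦄, X ⊆ Y → v ∉ Y →
    f (insert v X) - f X ≥ f (insert v Y) - f Y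

/-- The chain `S⁽ⁱ⁾ = {π(1),…,π(i)}` determined by a permutation `π`. -/
def chainSet {n : ℕ} (π : Equiv.Perm (Fin n)) (i : ℕ) : Finset (Fin n) :=
  (Finset.univ.filter (fun k : Fin n => (k : ℕ) < i)).image π

lemma mem_chainSet {n : ℕ} (π : Equiv.Perm (Fin n)) (i : ℕ) (e : Fin n) :
    e ∈ chainSet π i ↔ (π.symm e : ℕ) < i := by
  simp only [chainSet, Finset.mem_image, Finset.mem_filter, Finset.mem_univ, true_and]
  constructor
  · rintro ⟨k, hk, rfl⟩; simpa using hk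
  · intro hk; exact ⟨π.symm e, hk, by simp⟩

/-- Edmonds' greedy vector defines a modular lower bound of the submodular
function `h` on every subset. -/
theorem greedy_modular_lower_bound {n : ℕ} (h : Finset (Fin n) → ℝ)
    (hsub : Submodular h) (h0 : h ∅ = 0) (π : Equiv.Perm (Fin n))
    (v : Fin n → ℝ)
    (hv : ∀ e : Fin n,
      v e = h (chainSet π ((π.symm e : ℕ) + 1)) - h (chainSet π (π.symm e))) :
    ∀ X : Finset (Fin n), ∑ e ∈ X, v e ≤ h X := by
  intro X
  set F : ℕ → Finset (Fin n) := fun i => X.filter (fun e => (π.symm e : ℕ) < i) with hF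
  have key : ∀ i, ∑ e ∈ F i, v e ≤ h (F i) := by
    intro i
    induction i with
    | zero =>
      have : F 0 = ∅ := by
        ext e; simp [hF]
      rw [this, h0]; simp
    | succ i ih =>
      by_cases hc : ∃ e ∈ X, (π.symm e : ℕ) = i
      · obtain ⟨e, heX, hei⟩ := hc
        have hin : i < n := hei ▸ (π.symm e).isLt
        have hnotF : e ∉ F i := by simp [hF, hei]
        have hFs : F (i + 1) = insert e (F i) := by
          ext x
          simp only [hF, Finset.mem_filter, Finset.mem_insert]
          constructor
          · rintro ⟨hx, hlt⟩
            rcases Nat.lt_succ_iff_lt_or_eq.mp hlt with hl | he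
            · exact Or.inr ⟨hx, hl⟩
            · left
              have : π.symm x = π.symm e := Fin.ext (by omega)
              exact π.symm.injective this
          · rintro (rfl | ⟨hx, hl⟩)
            · exact ⟨heX, by omega⟩
            · exact ⟨hx, by omega⟩
        have hsubset : F i ⊆ chainSet π i := by
          intro x hx
          rw [mem_chainSet]
          exact (Finset.mem_filter.mp hx).2
        have hnotC : e ∉ chainSet π i := by
          rw [mem_chainSet]; omega
        have hCs : chainSet π (i + 1) = insert e (chainSet π i) := by
          ext x
          rw [Finset.mem_insert, mem_chainSet, mem_chainSet]
          constructor
          · intro hlt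
            rcases Nat.lt_succ_iff_lt_or_eq.mp hlt with hl | he
            · exact Or.inr hl
            · left
              exact π.symm.injective (Fin.ext (by omega))
          · rintro (rfl | hl) <;> omega
        have hve : v e = h (insert e (chainSet π i)) - h (chainSet π i) := by
          rw [hv e, hei, hCs]
        have hsm := hsub hsubset hnotC
        rw [hFs, Finset.sum_insert hnotF]
        have : v e ≤ h (insert e (F i)) - h (F i) := by
          rw [hve]; linarith [hsm]
        linarith
      · have : F (i + 1) = F i := by
          ext x
          simp only [hF, Finset.mem_filter]
          constructor
          · rintro ⟨hx, hlt⟩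
            refine ⟨hx, ?_⟩
            rcases Nat.lt_succ_iff_lt_or_eq.mp hlt with hl | he
            · exact hl
            · exact absurd ⟨x, hx, he⟩ hc
          · rintro ⟨hx, hl⟩; exact ⟨hx, by omega⟩
        rw [this]; exact ih
  have hXF : F n = X := by
    ext x; simp [hF, (π.symm x).isLt]
  calc ∑ e ∈ X, v e = ∑ e ∈ F n, v e := by rw [hXF]
    _ ≤ h (F n) := key n
    _ = h X := by rw [hXF]
end

section
/- Let g : 2^V → ℝ be submodular and Y ⊆ V. Then for every X ⊆ V, g(X) ≤ g(Y) − Σ_{j ∈ Y \ X} (g(Y) − g(Y \ {j})) + Σ_{j ∈ X \ Y} (g({j}) − g(∅)). -/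
lemma aux_add {n : ℕ} (g : Finset (Fin n) → ℝ) (hg : Submodular g)
    (B : Finset (Fin n)) :
    ∀ S : Finset (Fin n), Disjoint S B →
      g (B ∪ S) ≤ g B + ∑ j ∈ S, (g {j} - g ∅) := by
  intro S
  induction S using Finset.induction_on with
  | empty => simp
  | @insert j S hj ih =>
    intro hdisj
    have hdS : Disjoint S B := (Finset.disjoint_insert_left.mp hdisj).2
    have hjB : j ∉ B := (Finset.disjoint_insert_left.mp hdisj).1
    have hjBS : j ∉ B ∪ S := by simp [hjB, hj]
    have h1 : g (insert j ∅) - g ∅ ≥ g (insert j (B ∪ S)) - g (B ∪ S) :=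
      hg (Finset.empty_subset _) hjBS
    have h2 := ih hdS
    have : B ∪ insert j S = insert j (B ∪ S) := by
      ext x; simp [or_comm, or_left_comm]
    rw [this, Finset.sum_insert hj]
    have : g (insert j ∅) = g {j} := by norm_num
    rw [this] at h1
    linarith

lemma aux_remove {n : ℕ} (g : Finset (Fin n) → ℝ) (hg : Submodular g)
    (Y : Finset (Fin n)) :
    ∀ T : Finset (Fin n), T ⊆ Y →
      g (Y \ T) ≤ g Y - ∑ j ∈ T, (g Y - g (Y.erase j)) := by
  intro T
  induction T using Finset.induction_on with
  | empty => simp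
  | @insert j T hj ih =>
    intro hsub
    have hjY : j ∈ Y := hsub (Finset.mem_insert_self j T)
    have hT : T ⊆ Y := fun x hx => hsub (Finset.mem_insert_of_mem hx)
    have key : g (Y \ T) - g ((Y \ T).erase j) ≥ g Y - g (Y.erase j) := by
      have hss : (Y \ T).erase j ⊆ Y.erase j :=
        Finset.erase_subset_erase j (Finset.sdiff_subset)
      have hjne : j ∉ Y.erase j := Finset.notMem_erase j Y
      have h := hg hss hjne
      have hjYT : j ∈ Y \ T := Finset.mem_sdiff.mpr ⟨hjY, hj⟩
      rw [Finset.insert_erase hjYT, Finset.insert_erase hjY] at h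
      exact h
    have heq : Y \ insert j T = (Y \ T).erase j := by
      ext x; simp [Finset.mem_erase, and_comm, and_left_comm]
    rw [heq, Finset.sum_insert hj]
    have := ih hT
    linarith

/-- Tight modular upper bound of a submodular function about a reference set
`Y` (Nemhauser–Wolsey–Fisher type). -/
theorem submodular_modular_upper_bound {n : ℕ} (g : Finset (Fin n) → ℝ)
    (hg : Submodular g) (Y : Finset (Fin n)) :
    ∀ X : Finset (Fin n),
      g X ≤ g Y - (∑ j ∈ Y \ X, (g Y - g (Y.erase j)))
        + ∑ j ∈ X \ Y, (g {j} - g ∅) := by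
  intro X
  have h1 : g ((X ∩ Y) ∪ (X \ Y)) ≤ g (X ∩ Y) + ∑ j ∈ X \ Y, (g {j} - g ∅) := by
    apply aux_add g hg
    exact (Finset.disjoint_sdiff_inter X Y)
  have h2 : g (Y \ (Y \ X)) ≤ g Y - ∑ j ∈ Y \ X, (g Y - g (Y.erase j)) :=
    aux_remove g hg Y (Y \ X) Finset.sdiff_subset
  have e1 : (X ∩ Y) ∪ (X \ Y) = X := by
    ext x; by_cases hx : x ∈ Y <;> simp [hx]
  have e2 : Y \ (Y \ X) = X ∩ Y := by
    ext x; simp [and_comm]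
  rw [e1] at h1
  rw [e2] at h2
  linarith
end
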